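/- If g₁ and g̃₁ are continuous functions on [0,∞) such that g₁ is periodic with period τ > 0, g̃₁ is periodic with period τ̃ > 0, and g̃₁(t) - g₁(t) = O(t^{-1/2}) as t → ∞, then g̃₁ = g₁ (in particular g̃₁ also has period τ). -/
import Mathlib

open Filter

private lemma periter (g : ℝ → ℂ) (p : ℝ) (hp : 0 < p)
    (hper : ∀ t : ℝ, 0 ≤ t → g (t + p) = g t) :
    ∀ (n : ℕ) (t : ℝ), 0 ≤ t → g (t + n * p) = g t := by
  intro n
  induction n with
  | zero => intro t ht; simp
  | succ k ih =>
      intro t ht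
      have h1 : (t : ℝ) + (k + 1 : ℕ) * p = (t + k * p) + p := by
        push_cast; ring
      have h2 : (0:ℝ) ≤ t + k * p := by positivity
      rw [h1, hper _ h2, ih t ht]

private lemma aux_tendsto (g g' : ℝ → ℂ) (p : ℝ) (hp : 0 < p)
    (hper : ∀ t : ℝ, 0 ≤ t → g (t + p) = g t)
    (hO : ∃ C T : ℝ, 0 < C ∧ 0 < T ∧
      ∀ t : ℝ, T ≤ t → ‖g' t - g t‖ ≤ C * t ^ (-(1:ℝ)/2))
    (b : ℝ) (hb : 0 ≤ b) :
    Tendsto (fun n : ℕ => g' (b + n * p)) atTop (nhds (g b)) := by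
  obtain ⟨C, T, hC, hT, hbound⟩ := hO
  have hseq : Tendsto (fun n : ℕ => b + n * p) atTop atTop := by
    apply tendsto_atTop_add_const_left
    exact Tendsto.atTop_mul_const hp tendsto_natCast_atTop_atTop
  have hbnd : Tendsto (fun n : ℕ => C * (b + n * p) ^ (-(1:ℝ)/2)) atTop (nhds 0) := by
    have h0 : Tendsto (fun x : ℝ => x ^ (-(1:ℝ)/2)) atTop (nhds 0) := by
      have : -(1:ℝ)/2 = -(1/2 : ℝ) := by norm_num
      rw [this]
      exact tendsto_rpow_neg_atTop (by norm_num)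
    have := (h0.comp hseq).const_mul C
    simpa using this
  have hev : ∀ᶠ n : ℕ in atTop, ‖g' (b + n * p) - g b‖ ≤ C * (b + n * p) ^ (-(1:ℝ)/2) := by
    filter_upwards [hseq.eventually_ge_atTop T] with n hn
    have h2 : g (b + n * p) = g b := periter g p hp hper n b hb
    rw [← h2]
    exact hbound _ hn
  have : Tendsto (fun n : ℕ => g' (b + n * p) - g b) atTop (nhds 0) :=
    squeeze_zero_norm' hev hbnd
  have := this.add_const (g b)
  simpa using this

/-- if `g₁, g̃₁ : [0,∞) → ℂ` are continuous, periodic with periods `τ, τ̃ > 0`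
respectively, and `g̃₁(t) - g₁(t) = O(t^{-1/2})` as `t → ∞`, then `g̃₁ = g₁`. -/
theorem stmt_4 (g₁ g₁' : ℝ → ℂ) (τ τ' : ℝ) (hτ : 0 < τ) (hτ' : 0 < τ')
    (hc : ContinuousOn g₁ (Set.Ici 0)) (hc' : ContinuousOn g₁' (Set.Ici 0))
    (hper : ∀ t : ℝ, 0 ≤ t → g₁ (t + τ) = g₁ t)
    (hper' : ∀ t : ℝ, 0 ≤ t → g₁' (t + τ') = g₁' t)
    (hO : ∃ C T : ℝ, 0 < C ∧ 0 < T ∧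
      ∀ t : ℝ, T ≤ t → ‖g₁' t - g₁ t‖ ≤ C * t ^ (-(1:ℝ)/2)) :
    ∀ t : ℝ, 0 ≤ t → g₁' t = g₁ t := by
  -- Step 1: g₁ is also τ'-periodic.
  have hper₁' : ∀ t : ℝ, 0 ≤ t → g₁ (t + τ') = g₁ t := by
    intro t ht
    have ht' : (0:ℝ) ≤ t + τ' := by positivity
    have l1 : Tendsto (fun n : ℕ => g₁' (t + n * τ)) atTop (nhds (g₁ t)) :=
      aux_tendsto g₁ g₁' τ hτ hper hO t ht
    have l2 : Tendsto (fun n : ℕ => g₁' (t + τ' + n * τ)) atTop (nhds (g₁ (t + τ'))) :=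
      aux_tendsto g₁ g₁' τ hτ hper hO (t + τ') ht'
    have heq : (fun n : ℕ => g₁' (t + τ' + n * τ)) = fun n : ℕ => g₁' (t + n * τ) := by
      funext n
      have : t + τ' + n * τ = (t + n * τ) + τ' := by ring
      rw [this, hper' _ (by positivity)]
    rw [heq] at l2
    exact tendsto_nhds_unique l2 l1
  -- Step 2: now use the lemma with period τ'.
  intro t ht
  have l1 : Tendsto (fun n : ℕ => g₁' (t + n * τ')) atTop (nhds (g₁ t)) :=
    aux_tendsto g₁ g₁' τ' hτ' hper₁' hO t ht
  have heq : (fun n : ℕ => g₁' (t + n * τ')) = fun _ : ℕ => g₁' t := by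
    funext n
    exact periter g₁' τ' hτ' hper' n t ht
  rw [heq] at l1
  exact tendsto_nhds_unique tendsto_const_nhds l1
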